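/- Let π, e, g, q, Fg, Femg, Fepg, E_DA, E_TTC be reals with 0 < π < 1/2, 0 < q < 1, 0 ≤ g, e > 2g, g ≤ Fg, Fg < 1 − q, 1 − q < e − g, e − g ≤ Femg, Femg ≤ Fepg, and g < E_DA ≤ E_TTC ≤ 1 − q. Define D̄ := (1−π)·((1−q) − Fg) + π·(Fg + Femg), S̄ := π·(Fepg − (1−q)), X̄ := π·(Femg − (1−q)), and assume D̄ − S̄ > 0. Define p_DA := ((D̄−S̄)/D̄)·((1−π)·(E_DA − g) + π·e) and p_TTC := ((D̄−S̄)/(D̄−X̄))·((1−2π)·E_TTC + 2π·e − g). Then p_DA < p_TTC. -/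
import Mathlib


/-- Aggregate (market-clearing) demand for an oversubscribed school,
with `Fg = F(g)` and `Femg = F(e−g)`. -/
noncomputable def DbarV (π q Fg Femg : ℝ) : ℝ :=
  (1 - π) * ((1 - q) - Fg) + π * (Fg + Femg)

/-- Aggregate supply of vacated seats, with `Fepg = F(e+g)`. -/
noncomputable def SbarV (π q Fepg : ℝ) : ℝ :=
  π * (Fepg - (1 - q))

/-- Aggregate mass of in-zone residents pointing to another oversubscribed school. -/
noncomputable def XbarV (π q Femg : ℝ) : ℝ :=
  π * (Femg - (1 - q))

/-- Equilibrium housing price under Deferred Acceptance. -/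
noncomputable def pDA (π e g q Fg Femg Fepg E_DA : ℝ) : ℝ :=
  ((DbarV π q Fg Femg - SbarV π q Fepg) / DbarV π q Fg Femg)
    * ((1 - π) * (E_DA - g) + π * e)

/-- Equilibrium housing price under Top Trading Cycles. -/
noncomputable def pTTC (π e g q Fg Femg Fepg E_TTC : ℝ) : ℝ :=
  ((DbarV π q Fg Femg - SbarV π q Fepg) / (DbarV π q Fg Femg - XbarV π q Femg))
    * ((1 - 2 * π) * E_TTC + 2 * π * e - g)

theorem stmt_13 (π e g q Fg Femg Fepg E_DA E_TTC : ℝ)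
    (hπ0 : 0 < π) (hπ1 : π < 1 / 2) (hq0 : 0 < q) (hq1 : q < 1)
    (hg0 : 0 ≤ g) (he : 2 * g < e)
    (hgFg : g ≤ Fg) (hFg : Fg < 1 - q) (hqe : 1 - q < e - g)
    (hFemg : e - g ≤ Femg) (hFF : Femg ≤ Fepg)
    (hEDA0 : g < E_DA) (hE : E_DA ≤ E_TTC) (hETTC : E_TTC ≤ 1 - q)
    (hDS : 0 < DbarV π q Fg Femg - SbarV π q Fepg) :
    pDA π e g q Fg Femg Fepg E_DA < pTTC π e g q Fg Femg Fepg E_TTC := by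
  unfold pDA pTTC
  set D := DbarV π q Fg Femg with hDdef
  set S := SbarV π q Fepg with hSdef
  set X := XbarV π q Femg with hXdef
  have hX0 : 0 < X := by
    rw [hXdef]; unfold XbarV; nlinarith
  have hSX : X ≤ S := by
    rw [hXdef, hSdef]; unfold XbarV SbarV; nlinarith
  have hDX : 0 < D - X := by linarith
  have hD0 : 0 < D := by linarith
  have hA : 0 < (1 - π) * (E_DA - g) + π * e := by nlinarith
  have hAB : (1 - π) * (E_DA - g) + π * e < (1 - 2 * π) * E_TTC + 2 * π * e - g := by
    nlinarith [mul_le_mul_of_nonneg_left hE (by linarith : (0:ℝ) ≤ 1 - 2*π)]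
  have hr : (D - S) / D < (D - S) / (D - X) := by
    apply div_lt_div_of_pos_left hDS hDX
    linarith
  have hr0 : 0 < (D - S) / D := div_pos hDS hD0
  calc (D - S) / D * ((1 - π) * (E_DA - g) + π * e)
      < (D - S) / (D - X) * ((1 - π) * (E_DA - g) + π * e) := by
        exact mul_lt_mul_of_pos_right hr hA
    _ < (D - S) / (D - X) * ((1 - 2 * π) * E_TTC + 2 * π * e - g) := by
        apply mul_lt_mul_of_pos_left hAB
        exact div_pos hDS hDX
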